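/- arXiv:1712.01473 — 3 statements merged into one kernel-verified Lean document; each statement's English description precedes it below -/
import Mathlib

section
/- Let u ∈ ℝ^{d_k} be a unit vector with uᵀ Ŵ_{k,-} = 0 where Ŵ_{k,-} = Ŵ_k ··· Ŵ_1, and for each j > k let w_j ∈ ℝ^{d_j} be a unit vector and δ_j ∈ [0, ε₀/2]. Define W̃_j = Ŵ_j for j ≤ k and, inductively choosing u_{j-1} the appropriate null left-singular vector, W̃_j = Ŵ_j + δ_j w_j û_{j-1}ᵀ for j > k (with û_k = u). Then the full products coincide: W̃_L ··· W̃_1 = Ŵ_L ··· Ŵ_1, and ‖W̃_j − Ŵ_j‖_fro ≤ ε₀/2 for all j. -/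
open Matrix

/-- Frobenius norm of a real matrix. -/
noncomputable def frob {m n : ℕ} (A : Matrix (Fin m) (Fin n) ℝ) : ℝ :=
  Real.sqrt (∑ i, ∑ j, (A i j)^2)

/-- `prodUpTo d k W = W (k-1) * ⋯ * W 1 * W 0`, the product of the first `k` layer
matrices: in the paper's 1-indexed notation this is the truncated product
`W_{k,-} = W_k ⋯ W_1`, and `prodUpTo d L W = W_L ⋯ W_1` is the full network product. -/
noncomputable def prodUpTo (d : ℕ → ℕ) : (k : ℕ) →
    ((j : ℕ) → Matrix (Fin (d (j+1))) (Fin (d j)) ℝ) → Matrix (Fin (d k)) (Fin (d 0)) ℝ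
  | 0, _ => 1
  | k+1, W => W k * prodUpTo d k W

/-- `G` is the gradient of `f` at `A`:  `f (A+H) = f A + ⟨G, H⟩_fro + o(‖H‖_fro)`,
where `⟨G, H⟩_fro = Tr (Gᵀ H)` is the Frobenius inner product. -/
def HasGradAt {m n : ℕ} (f : Matrix (Fin m) (Fin n) ℝ → ℝ)
    (A G : Matrix (Fin m) (Fin n) ℝ) : Prop :=
  ∀ ε > (0:ℝ), ∃ δ > (0:ℝ), ∀ H : Matrix (Fin m) (Fin n) ℝ,
    frob H ≤ δ → |f (A + H) - f A - (Gᵀ * H).trace| ≤ ε * frob H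

/-!
Each perturbation `W̃_j - Ŵ_j` annihilates the perturbed product below it: for `j ≥ k` it
is `δ_j w_j û_{j-1}ᵀ`, and `û_{j-1}ᵀ W̃_{j-1,-} = 0`. Hence `W̃_j W̃_{j-1,-} = Ŵ_j W̃_{j-1,-}`
at every layer, and induction replaces the layers one at a time.
-/

section Frobenius

variable {m n : ℕ}

@[simp]
lemma frob_zero : frob (0 : Matrix (Fin m) (Fin n) ℝ) = 0 := by
  simp [frob]

lemma frob_smul (c : ℝ) (A : Matrix (Fin m) (Fin n) ℝ) : frob (c • A) = |c| * frob A := by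
  have hsum : ∑ i, ∑ j, (c • A) i j ^ 2 = c ^ 2 * ∑ i, ∑ j, A i j ^ 2 := by
    simp only [Matrix.smul_apply, smul_eq_mul, mul_pow, Finset.mul_sum]
  rw [frob, frob, hsum, Real.sqrt_mul (sq_nonneg c), Real.sqrt_sq_eq_abs]

lemma frob_vecMulVec (w : Fin m → ℝ) (u : Fin n → ℝ) :
    frob (vecMulVec w u) = Real.sqrt (∑ i, w i ^ 2) * Real.sqrt (∑ j, u j ^ 2) := by
  have hsum : ∑ i, ∑ j, vecMulVec w u i j ^ 2 = (∑ i, w i ^ 2) * ∑ j, u j ^ 2 := by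
    simp only [vecMulVec_apply, mul_pow, Finset.sum_mul_sum]
  rw [frob, hsum, Real.sqrt_mul (Finset.sum_nonneg fun i _ => sq_nonneg (w i))]

end Frobenius

lemma prodUpTo_eq_of_sub_mul_eq_zero {d : ℕ → ℕ}
    {W W' : (j : ℕ) → Matrix (Fin (d (j+1))) (Fin (d j)) ℝ} {m : ℕ}
    (h : ∀ j < m, (W' j - W j) * prodUpTo d j W' = 0) :
    prodUpTo d m W' = prodUpTo d m W := by
  induction m with
  | zero => rfl
  | succ m ih =>
    have hstep : W' m * prodUpTo d m W' = W m * prodUpTo d m W' :=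
      sub_eq_zero.mp (by rw [← Matrix.sub_mul]; exact h m m.lt_succ_self)
    change W' m * prodUpTo d m W' = W m * prodUpTo d m W
    rw [hstep, ih fun j hj => h j (hj.trans m.lt_succ_self)]

theorem stmt5_general (L k : ℕ) (d : ℕ → ℕ) (ε₀ : ℝ) (hε : 0 < ε₀)
    (What : (j : ℕ) → Matrix (Fin (d (j+1))) (Fin (d j)) ℝ)
    (u : (j : ℕ) → Fin (d j) → ℝ)
    (w : (j : ℕ) → Fin (d (j+1)) → ℝ)
    (δ : ℕ → ℝ)
    (hδ : ∀ j, k ≤ j → 0 ≤ δ j ∧ δ j ≤ ε₀ / 2)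
    (hw : ∀ j, k ≤ j → Real.sqrt (∑ i, (w j i)^2) = 1)
    (hu : ∀ j, k ≤ j → Real.sqrt (∑ i, (u j i)^2) = 1)
    (Wt : (j : ℕ) → Matrix (Fin (d (j+1))) (Fin (d j)) ℝ)
    (hWt : ∀ j, Wt j = if j < k then What j
      else What j + δ j • Matrix.vecMulVec (w j) (u j))
    (hnull : ∀ j, k ≤ j → j < L → Matrix.vecMul (u j) (prodUpTo d j Wt) = 0) :
    prodUpTo d L Wt = prodUpTo d L What ∧ ∀ j < L, frob (Wt j - What j) ≤ ε₀ / 2 := by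
  have hlow : ∀ j < k, Wt j - What j = 0 := fun j hj => by
    rw [hWt j, if_pos hj, sub_self]
  have hhigh : ∀ j, k ≤ j → Wt j - What j = δ j • vecMulVec (w j) (u j) := fun j hj => by
    rw [hWt j, if_neg hj.not_gt, add_sub_cancel_left]
  refine ⟨prodUpTo_eq_of_sub_mul_eq_zero fun j hj => ?_, fun j _ => ?_⟩
  · rcases lt_or_ge j k with hjk | hjk
    · rw [hlow j hjk, Matrix.zero_mul]
    · rw [hhigh j hjk, Matrix.smul_mul, vecMulVec_mul, hnull j hjk hj]
      ext
      simp [vecMulVec_apply]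
  · rcases lt_or_ge j k with hjk | hjk
    · rw [hlow j hjk, frob_zero]
      exact (half_pos hε).le
    · obtain ⟨hδ_nonneg, hδ_le⟩ := hδ j hjk
      rw [hhigh j hjk, frob_smul, frob_vecMulVec, hw j hjk, hu j hjk, abs_of_nonneg hδ_nonneg,
        mul_one, mul_one]
      exact hδ_le

/-- Claim 2: let `u` be a unit vector with `uᵀ Ŵ_{k,-} = 0`, and perturb the layers above
`k` by rank-one terms `δ_j w_j û_{j-1}ᵀ` (unit vectors `w_j`, `0 ≤ δ_j ≤ ε₀/2`, with
`û_{j-1}` a unit left null vector of the perturbed truncated product, `û_k = u`).  Then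
the full products coincide and `‖W̃_j − Ŵ_j‖_fro ≤ ε₀/2` for all `j`.
(Here layer slot `j` of Lean corresponds to the paper's `W_{j+1}`; the hypothesis
`hnull` at `j = k` is exactly `uᵀ Ŵ_{k,-} = 0` since the layers below `k` are unchanged.) -/
theorem stmt5 (L k : ℕ) (hk : k < L) (d : ℕ → ℕ) (ε₀ : ℝ) (hε : 0 < ε₀)
    (What : (j : ℕ) → Matrix (Fin (d (j+1))) (Fin (d j)) ℝ)
    (u : (j : ℕ) → Fin (d j) → ℝ)
    (w : (j : ℕ) → Fin (d (j+1)) → ℝ)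
    (δ : ℕ → ℝ)
    (hδ : ∀ j, k ≤ j → 0 ≤ δ j ∧ δ j ≤ ε₀ / 2)
    (hw : ∀ j, k ≤ j → Real.sqrt (∑ i, (w j i)^2) = 1)
    (hu : ∀ j, k ≤ j → Real.sqrt (∑ i, (u j i)^2) = 1)
    (Wt : (j : ℕ) → Matrix (Fin (d (j+1))) (Fin (d j)) ℝ)
    (hWt : ∀ j, Wt j = if j < k then What j
      else What j + δ j • Matrix.vecMulVec (w j) (u j))
    (hnull : ∀ j, k ≤ j → j < L → Matrix.vecMul (u j) (prodUpTo d j Wt) = 0) :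
    prodUpTo d L Wt = prodUpTo d L What ∧ ∀ j < L, frob (Wt j - What j) ≤ ε₀ / 2 :=
  stmt5_general L k d ε₀ hε What u w δ hδ hw hu Wt hWt hnull
end

section
/- Let f(x,y) = |x| + max(1−y, 0) − 1 and F(W_1, W_2) = f(W_2 W_1) for W_1 ∈ ℝ and W_2 ∈ ℝ². Then the point Ŵ_1 = 0, Ŵ_2 = (1,0)ᵀ is a local minimizer of F which is not a global minimizer: F(Ŵ_1, Ŵ_2) = 0 > −1 = inf F. -/
open Matrix


/-- The bivariate function `f(x,y) = |x| + max(1−y, 0) − 1` from the counterexample. -/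
noncomputable def fc (p : ℝ × ℝ) : ℝ := |p.1| + max (1 - p.2) 0 - 1

/-- Euclidean norm on `ℝ²`. -/
noncomputable def enorm₂ (p : ℝ × ℝ) : ℝ := Real.sqrt (p.1^2 + p.2^2)

/-! Since `max (1 - y) 0 ≥ 1 - y`, we have `F(W₁, W₂) ≥ |W₁| (|W₂.1| - |W₂.2|)`, which is
nonnegative as soon as `|W₂.2| ≤ |W₂.1|`, in particular on a ball around `(1, 0)`. The infimum
`-1` is attained at `W₁ = 1`, `W₂ = (0, 1)`, which lies on no such ball. -/

lemma abs_fst_le_enorm₂ (p : ℝ × ℝ) : |p.1| ≤ enorm₂ p := by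
  rw [← Real.sqrt_sq_eq_abs]
  exact Real.sqrt_le_sqrt (le_add_of_nonneg_right (sq_nonneg p.2))

lemma abs_snd_le_enorm₂ (p : ℝ × ℝ) : |p.2| ≤ enorm₂ p := by
  rw [← Real.sqrt_sq_eq_abs]
  exact Real.sqrt_le_sqrt (le_add_of_nonneg_left (sq_nonneg p.1))

lemma neg_one_le_fc (p : ℝ × ℝ) : -1 ≤ fc p := by
  have := abs_nonneg p.1
  have := le_max_right (1 - p.2) 0
  unfold fc
  linarith

lemma fc_smul_nonneg_of_abs_snd_le_abs_fst (a : ℝ) {v : ℝ × ℝ} (hv : |v.2| ≤ |v.1|) :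
    0 ≤ fc (a • v) := by
  have hsnd : a * v.2 ≤ |a| * |v.1| :=
    calc a * v.2 ≤ |a * v.2| := le_abs_self _
      _ = |a| * |v.2| := abs_mul a v.2
      _ ≤ |a| * |v.1| := mul_le_mul_of_nonneg_left hv (abs_nonneg a)
  have := le_max_left (1 - a * v.2) 0
  simp only [fc, Prod.smul_fst, Prod.smul_snd, smul_eq_mul, abs_mul]
  linarith

lemma abs_snd_le_abs_fst_of_enorm₂_sub_le {v : ℝ × ℝ} (hv : enorm₂ (v - (1, 0)) ≤ 1 / 2) :
    |v.2| ≤ |v.1| := by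
  have h₁ : |v.1 - 1| ≤ 1 / 2 := by simpa using (abs_fst_le_enorm₂ _).trans hv
  have h₂ : |v.2| ≤ 1 / 2 := by simpa using (abs_snd_le_enorm₂ _).trans hv
  have := le_abs_self v.1
  linarith [(abs_le.mp h₁).1]

/-- For `F(W₁, W₂) = f(W₂ W₁)` with `W₁ ∈ ℝ`, `W₂ ∈ ℝ²` and `f` from the counterexample,
the point `Ŵ₁ = 0`, `Ŵ₂ = (1,0)ᵀ` is a local minimizer of `F` which is not global:
`F(Ŵ₁,Ŵ₂) = 0 > −1 = inf F`. -/
theorem stmt11 :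
    (∃ r > (0:ℝ), ∀ (W₁ : ℝ) (W₂ : ℝ × ℝ),
      |W₁ - 0| ≤ r → enorm₂ (W₂ - (1, 0)) ≤ r →
      fc (W₁ • W₂) ≥ fc ((0:ℝ) • ((1:ℝ), (0:ℝ)))) ∧
    fc ((0:ℝ) • ((1:ℝ), (0:ℝ))) = 0 ∧
    (∀ (W₁ : ℝ) (W₂ : ℝ × ℝ), -1 ≤ fc (W₁ • W₂)) ∧
    (∃ (W₁ : ℝ) (W₂ : ℝ × ℝ), fc (W₁ • W₂) = -1) := by
  have hval : fc ((0:ℝ) • ((1:ℝ), (0:ℝ))) = 0 := by simp [fc]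
  refine ⟨⟨1 / 2, by norm_num, fun W₁ W₂ _ hW₂ => ?_⟩, hval,
    fun W₁ W₂ => neg_one_le_fc _, ⟨1, (0, 1), by norm_num [fc]⟩⟩
  rw [hval]
  exact fc_smul_nonneg_of_abs_snd_le_abs_fst W₁ (abs_snd_le_abs_fst_of_enorm₂_sub_le hW₂)
end

section
/- Let f(x,y) = x² − y² and F(W_1, W_2) = f(W_2 W_1) for W_1 ∈ ℝ, W_2 ∈ ℝ². Then (Ŵ_1, Ŵ_2) = (0, (1,0)ᵀ) is a local minimizer of F, even though ∇f(0,0) = 0 and (0,0) is a saddle point (not a local minimum) of f. -/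
open Matrix


/-- `f(x,y) = x² − y²` from the concluding remarks. -/
noncomputable def fs (p : ℝ × ℝ) : ℝ := p.1^2 - p.2^2

/-- Euclidean norm on `ℝ²`. -/
noncomputable def enormR2 (p : ℝ × ℝ) : ℝ := Real.sqrt (p.1^2 + p.2^2)

/-! Since `F(W₁, W₂) = W₁² f(W₂)`, it suffices that `f ≥ 0` near `(1, 0)`, which holds because
that neighbourhood lies in the cone `|y| ≤ |x|`. On the other hand `f(0, t) = -t² < 0`, so the
origin is a saddle of `f`, while `∇f(0,0) = 0` because `f` is a quadratic form. -/

lemma abs_fst_le_enormR2 (p : ℝ × ℝ) : |p.1| ≤ enormR2 p := by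
  rw [enormR2, ← Real.sqrt_sq_eq_abs]
  exact Real.sqrt_le_sqrt (le_add_of_nonneg_right (sq_nonneg p.2))

lemma abs_snd_le_enormR2 (p : ℝ × ℝ) : |p.2| ≤ enormR2 p := by
  rw [enormR2, ← Real.sqrt_sq_eq_abs]
  exact Real.sqrt_le_sqrt (le_add_of_nonneg_left (sq_nonneg p.1))

lemma enormR2_zero_left {t : ℝ} (ht : 0 ≤ t) : enormR2 (0, t) = t := by
  simp [enormR2, Real.sqrt_sq ht]

lemma fs_smul (c : ℝ) (p : ℝ × ℝ) : fs (c • p) = c ^ 2 * fs p := by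
  simp only [fs, Prod.smul_fst, Prod.smul_snd, smul_eq_mul]
  ring

lemma fs_nonneg_of_abs_snd_le_abs_fst {p : ℝ × ℝ} (h : |p.2| ≤ |p.1|) : 0 ≤ fs p := by
  rw [fs, sub_nonneg]
  exact sq_le_sq.mpr h

lemma fs_nonneg_of_enormR2_sub_le {p : ℝ × ℝ} {r : ℝ} (hr : r ≤ 1 / 2)
    (hp : enormR2 (p - (1, 0)) ≤ r) : 0 ≤ fs p := by
  have hx : |p.1 - 1| ≤ r := by simpa using (abs_fst_le_enormR2 _).trans hp
  have hy : |p.2| ≤ r := by simpa using (abs_snd_le_enormR2 _).trans hp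
  refine fs_nonneg_of_abs_snd_le_abs_fst (hy.trans ?_)
  calc r ≤ p.1 := by linarith [(abs_le.mp hx).1]
    _ ≤ |p.1| := le_abs_self p.1

lemma fs_zero_left (t : ℝ) : fs (0, t) = -t ^ 2 := by
  simp [fs]

lemma hasFDerivAt_fs_zero : HasFDerivAt fs (0 : ℝ × ℝ →L[ℝ] ℝ) (0, 0) := by
  have hfs : fs = fun p : ℝ × ℝ => p.1 * p.1 - p.2 * p.2 := by
    funext p
    simp only [fs, sq]
  rw [hfs]
  have hfst := hasFDerivAt_fst (𝕜 := ℝ) (p := ((0 : ℝ), (0 : ℝ)))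
  have hsnd := hasFDerivAt_snd (𝕜 := ℝ) (p := ((0 : ℝ), (0 : ℝ)))
  exact ((hfst.mul hfst).sub (hsnd.mul hsnd)).congr_fderiv (by ext <;> simp)

/-- For `f(x,y) = x² − y²` and `F(W₁,W₂) = f(W₂ W₁)`, the point `(0, (1,0)ᵀ)` is a local
minimizer of `F`, even though `∇f(0,0) = 0` and `(0,0)` is not a local minimum of `f`. -/
theorem stmt17 :
    (∃ r > (0:ℝ), ∀ (W₁ : ℝ) (W₂ : ℝ × ℝ),
      |W₁ - 0| ≤ r → enormR2 (W₂ - (1, 0)) ≤ r →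
      fs (W₁ • W₂) ≥ fs ((0:ℝ) • ((1:ℝ), (0:ℝ)))) ∧
    fderiv ℝ fs (0, 0) = 0 ∧
    ¬ (∃ r > (0:ℝ), ∀ p : ℝ × ℝ, enormR2 (p - (0, 0)) ≤ r → fs p ≥ fs (0, 0)) := by
  refine ⟨⟨1 / 4, by norm_num, fun W₁ W₂ _ hW₂ => ?_⟩, hasFDerivAt_fs_zero.fderiv, ?_⟩
  · rw [fs_smul, fs_smul, zero_pow two_ne_zero, zero_mul]
    exact mul_nonneg (sq_nonneg W₁) (fs_nonneg_of_enormR2_sub_le (by norm_num) hW₂)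
  · rintro ⟨r, hr, hmin⟩
    have haxis := hmin (0, r) (by rw [Prod.mk_sub_mk, sub_zero, sub_zero, enormR2_zero_left hr.le])
    rw [fs_zero_left, fs_zero_left] at haxis
    nlinarith
end
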